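/- arXiv:1507.06148 — 2 statements merged into one kernel-verified Lean document; each statement's English description precedes it below -/
import Mathlib

section
/- Let f be a weakly regular bent function in the class RF (f(0)=0 and there exists h with gcd(h-1,p-1)=1 and f(ax)=a^h f(x) for all a ∈ 𝔽_p^×). Then the dual f* satisfies f*(0) = 0. -/
open Complex

noncomputable def zp (p : ℕ) : ℂ := Complex.exp (2 * Real.pi * Complex.I / p)

noncomputable def sqrtPstar (p : ℕ) : ℂ :=
  if p % 4 = 1 then (Real.sqrt p : ℂ) else (Real.sqrt p : ℂ) * Complex.I

/-!
Write `ψ j = ζ_p ^ j` and `T = W_f(0) = ∑ₓ ψ (f x) = ε √(p*)^m ψ (f*(0))`. Squaring removes the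
irrational factor: `T² = ∑_{x,y} ψ (f x + f y) = s · ψ (2 f*(0))` with `s = ε² (p*)^m` a nonzero
integer. The only `ℤ`-linear relation among `1, ζ, …, ζ^(p-1)` is `∑ ζ^j = 0`, so an identity
`∑ₓ ψ (u x) = s · ψ j₀` determines the fibre sizes of `u` up to a common constant; in particular
it survives the Galois twist `ζ ↦ ζ^c`.

If some `a ∈ 𝔽_p^×` has `c = a^h ≠ 1`, the substitution `x ↦ a x` shows that the twisted sum
`∑ ψ (c (f x + f y))` is `T²` again, so `ψ (2c f*(0)) = ψ (2 f*(0))` and `f*(0) = 0`.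
Otherwise `f` is constant on each punctured line `𝔽_p^× x`. Since `𝔽_p^×` acts freely off the
origin, the fibres of `(x, y) ↦ f x + f y` have sizes `≡ [j = 0] (mod p - 1)`, whereas the
relation makes the sizes at `0` and at any `j ∉ {0, 2 f*(0)}` equal; as `p - 1 ≥ 2`, this
forces `2 f*(0) = 0`.
-/

open Finset

section Character

variable {p : ℕ} [NeZero p]

theorem isPrimitiveRoot_zp : IsPrimitiveRoot (zp p) p := by
  simpa [zp, mul_comm, mul_div_assoc] using Complex.isPrimitiveRoot_exp p (NeZero.ne p)

variable (p) in
noncomputable def zpChar : AddChar (ZMod p) ℂ :=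
  AddChar.zmodChar p isPrimitiveRoot_zp.pow_eq_one

theorem zpChar_apply (j : ZMod p) : zpChar p j = zp p ^ j.val := rfl

theorem isPrimitive_zpChar : (zpChar p).IsPrimitive :=
  AddChar.zmodChar_primitive_of_primitive_root p isPrimitiveRoot_zp

theorem zpChar_injective : Function.Injective (zpChar p) := fun i j hij =>
  ZMod.val_injective p (isPrimitiveRoot_zp.pow_inj (ZMod.val_lt i) (ZMod.val_lt j) hij)

theorem sum_zpChar_mul {c : ZMod p} (hc : c ≠ 0) : ∑ j, zpChar p (c * j) = 0 := by
  classical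
  simpa [mul_comm c, hc] using AddChar.sum_mulShift c isPrimitive_zpChar

end Character

theorem sum_comp_eq_sum_card_fiber_mul {ι κ R : Type*} [Fintype ι] [Fintype κ] [DecidableEq κ]
    [NonAssocSemiring R] (u : ι → κ) (g : κ → R) :
    ∑ x, g (u x) = ∑ b, (#{x | u x = b} : R) * g b := by
  rw [← Finset.sum_fiberwise univ u (fun x => g (u x))]
  refine sum_congr rfl fun b _ => ?_
  rw [sum_congr rfl fun x hx => by rw [(mem_filter.1 hx).2], sum_const, nsmul_eq_mul]

theorem card_units_dvd_card_of_smul_mem {K V : Type*} [DivisionRing K] [AddCommGroup V]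
    [Module K V] (s : Finset V) (hs0 : 0 ∉ s) (hs : ∀ (a : Kˣ), ∀ v ∈ s, a • v ∈ s) :
    Nat.card Kˣ ∣ #s := by
  let S : SubMulAction Kˣ V := ⟨s, fun a v hv => hs a v hv⟩
  have hfree (v : S) : MulAction.stabilizer Kˣ v = ⊥ := by
    rw [SubMulAction.stabilizer_of_subMul,
      Module.stabilizer_units_eq_bot_of_ne_zero K (ne_of_mem_of_not_mem v.2 hs0)]
  have hcard := Nat.card_congr (MulAction.selfEquivOrbitsQuotientProd hfree)
  rw [Nat.card_prod] at hcard
  exact Dvd.intro_left _ (hcard.symm.trans (Nat.card_eq_finsetCard s))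

section Relations

variable {p : ℕ} [Fact p.Prime]

open Polynomial in
theorem eq_of_sum_intCast_mul_zpChar_eq_zero {D : ZMod p → ℤ}
    (h : ∑ j, (D j : ℂ) * zpChar p j = 0) (i j : ZMod p) : D i = D j := by
  classical
  have hp : p.Prime := Fact.out
  set P : ℚ[X] := ∑ j : ZMod p, C (D j : ℚ) * X ^ j.val
  have hcoeff (i : ZMod p) : P.coeff i.val = D i := by
    simp [P, finsetSum_coeff, ZMod.val_injective p |>.eq_iff]
  have hroot : aeval (zp p) P = 0 := by
    simpa [P, map_sum, zpChar_apply] using h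
  obtain ⟨Q, hPQ⟩ : cyclotomic p ℚ ∣ P := by
    rw [cyclotomic_eq_minpoly_rat isPrimitiveRoot_zp hp.pos]
    exact minpoly.dvd ℚ _ hroot
  have hdeg : P.natDegree ≤ p - 1 :=
    natDegree_sum_le_of_forall_le _ _ fun j _ =>
      (natDegree_C_mul_X_pow_le _ _).trans (Nat.le_sub_one_of_lt (ZMod.val_lt j))
  -- `P` has degree `< p`, so it is a constant multiple of `Φ_p = 1 + X + ⋯ + X ^ (p - 1)`.
  obtain ⟨a, rfl⟩ : ∃ a, Q = C a := by
    refine ⟨_, eq_C_of_natDegree_eq_zero ?_⟩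
    rcases eq_or_ne Q 0 with rfl | hQ0
    · rfl
    · rw [hPQ, (cyclotomic.monic p ℚ).natDegree_mul' hQ0, natDegree_cyclotomic,
        Nat.totient_prime hp] at hdeg
      omega
  have hconst (i : ZMod p) : (D i : ℚ) = a := by
    rw [← hcoeff, hPQ, cyclotomic_prime, mul_comm, coeff_C_mul, finsetSum_coeff,
      sum_eq_single i.val (fun b _ hb => by simp [coeff_X_pow, Ne.symm hb]) (by simp [ZMod.val_lt]),
      coeff_X_pow_self, mul_one]
  exact_mod_cast (hconst i).trans (hconst j).symm

variable {ι : Type*} [Fintype ι]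

theorem exists_card_fiber_eq_of_sum_zpChar_eq (u : ι → ZMod p) {s : ℤ} {j₀ : ZMod p}
    (h : ∑ x, zpChar p (u x) = s * zpChar p j₀) :
    ∃ k : ℤ, ∀ j, (#{x | u x = j} : ℤ) = (if j = j₀ then s else 0) + k := by
  classical
  set D : ZMod p → ℤ := fun j => #{x | u x = j} - if j = j₀ then s else 0
  have hD : ∑ j, (D j : ℂ) * zpChar p j = 0 := by
    simp [D, sub_mul, sum_sub_distrib, ← sum_comp_eq_sum_card_fiber_mul, h]
  exact ⟨D 0, fun j => sub_eq_iff_eq_add'.1 (eq_of_sum_intCast_mul_zpChar_eq_zero hD j 0)⟩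

theorem sum_zpChar_mul_eq_of_sum_zpChar_eq (u : ι → ZMod p) {s : ℤ} {j₀ : ZMod p}
    (h : ∑ x, zpChar p (u x) = s * zpChar p j₀) {c : ZMod p} (hc : c ≠ 0) :
    ∑ x, zpChar p (c * u x) = s * zpChar p (c * j₀) := by
  classical
  obtain ⟨k, hk⟩ := exists_card_fiber_eq_of_sum_zpChar_eq u h
  calc ∑ x, zpChar p (c * u x)
      = ∑ j, (((if j = j₀ then s else 0) + k : ℤ) : ℂ) * zpChar p (c * j) := by
        simp_rw [sum_comp_eq_sum_card_fiber_mul u (fun j => zpChar p (c * j)), ← hk]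
        rfl
    _ = s * zpChar p (c * j₀) + k * ∑ j, zpChar p (c * j) := by
        simp [add_mul, sum_add_distrib, mul_sum]
    _ = s * zpChar p (c * j₀) := by rw [sum_zpChar_mul hc, mul_zero, add_zero]

theorem eq_zero_of_sum_zpChar_mul_eq_self (u : ι → ZMod p) {s : ℤ} (hs : s ≠ 0) {j₀ : ZMod p}
    (h : ∑ x, zpChar p (u x) = s * zpChar p j₀) {c : ZMod p} (hc0 : c ≠ 0) (hc : c ≠ 1)
    (hu : ∑ x, zpChar p (c * u x) = ∑ x, zpChar p (u x)) : j₀ = 0 := by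
  rw [sum_zpChar_mul_eq_of_sum_zpChar_eq u h hc0, h] at hu
  have := zpChar_injective (mul_left_cancel₀ (Int.cast_ne_zero.2 hs) hu)
  have : (c - 1) * j₀ = 0 := by linear_combination this
  exact (mul_eq_zero.1 this).resolve_left (sub_ne_zero.2 hc)

theorem eq_zero_of_sum_zpChar_eq_of_smul_invariant {V : Type*} [AddCommGroup V]
    [Module (ZMod p) V] [Fintype V] (hp : 3 ≤ p) {u : V → ZMod p} (hu0 : u 0 = 0)
    (hu : ∀ (a : (ZMod p)ˣ) (v : V), u (a • v) = u v) {s : ℤ} {j₀ : ZMod p}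
    (h : ∑ v, zpChar p (u v) = s * zpChar p j₀) : j₀ = 0 := by
  classical
  by_contra hj₀
  obtain ⟨j₁, -, hj₁⟩ := exists_mem_notMem_of_card_lt_card (s := {0, j₀}) (t := univ)
    (by rw [card_univ, ZMod.card]; exact card_le_two.trans_lt hp)
  rw [mem_insert, mem_singleton, not_or] at hj₁
  have hdvd (j : ZMod p) : p - 1 ∣ #(({v | u v = j} : Finset V).erase 0) := by
    rw [← ZMod.card_units p, ← Nat.card_eq_fintype_card]
    refine card_units_dvd_card_of_smul_mem _ (notMem_erase 0 _) fun a v hv => ?_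
    simp only [mem_erase, mem_filter, mem_univ, true_and] at hv ⊢
    exact ⟨(smul_ne_zero_iff_ne a).2 hv.1, (hu a v).trans hv.2⟩
  obtain ⟨k, hk⟩ := exists_card_fiber_eq_of_sum_zpChar_eq u h
  have hfib : #{v | u v = 0} = #{v | u v = j₁} := by
    have h0 := hk 0
    have h1 := hk j₁
    rw [if_neg (Ne.symm hj₀)] at h0
    rw [if_neg hj₁.2] at h1
    exact_mod_cast h0.trans h1.symm
  have h0 : #{v | u v = 0} = #(({v | u v = 0} : Finset V).erase 0) + 1 :=
    (card_erase_add_one (by simp [hu0])).symm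
  have h1 : ({v | u v = j₁} : Finset V).erase 0 = ({v | u v = j₁} : Finset V) :=
    erase_eq_of_notMem (by simp [hu0, Ne.symm hj₁.1])
  have : p - 1 ∣ 1 := by
    have := hdvd j₁
    rw [h1, ← hfib, h0] at this
    exact (Nat.dvd_add_right (hdvd 0)).1 this
  have := Nat.le_of_dvd one_pos this
  omega

end Relations

theorem sqrtPstar_sq (p : ℕ) :
    sqrtPstar p ^ 2 = ((if p % 4 = 1 then (p : ℤ) else -p : ℤ) : ℂ) := by
  have hsq : (Real.sqrt p : ℂ) ^ 2 = p := by
    rw [← ofReal_pow, Real.sq_sqrt p.cast_nonneg, ofReal_natCast]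
  unfold sqrtPstar
  split_ifs <;> simp [mul_pow, hsq]

theorem AddChar.sum_prod_add_eq_sq {A R ι : Type*} [AddMonoid A] [CommSemiring R] [Fintype ι]
    (ψ : AddChar A R) (u : ι → A) :
    ∑ z : ι × ι, ψ (u z.1 + u z.2) = (∑ x, ψ (u x)) ^ 2 := by
  simp [Fintype.sum_prod_type, AddChar.map_add_eq_mul, sq, sum_mul_sum]

theorem stmt_9_general (p m : ℕ) [Fact p.Prime] (hp2 : p ≠ 2)
    (F : Type) [Field F] [Fintype F] [Algebra (ZMod p) F]
    (f fstar : F → ZMod p) (ε : ℤ) (hε : ε = 1 ∨ ε = -1)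
    (hW : ∀ β : F, ∑ x : F, zp p ^ (f x + Algebra.trace (ZMod p) F (β * x)).val
      = (ε : ℂ) * sqrtPstar p ^ m * zp p ^ (fstar β).val)
    (hf0 : f 0 = 0) (h : ℕ)
    (hhom : ∀ (a : (ZMod p)ˣ) (x : F),
      f (algebraMap (ZMod p) F (a : ZMod p) * x) = (a : ZMod p) ^ h * f x) :
    fstar 0 = 0 := by
  classical
  have hp3 : 3 ≤ p := by have := (Fact.out : p.Prime).two_le; omega
  have hT : ∑ x, zpChar p (f x) = ε * sqrtPstar p ^ m * zpChar p (fstar 0) := by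
    simpa [zpChar_apply] using hW 0
  set s : ℤ := ε ^ 2 * (if p % 4 = 1 then (p : ℤ) else -p) ^ m
  have hs : s ≠ 0 := by
    refine mul_ne_zero (pow_ne_zero _ (by rcases hε with rfl | rfl <;> decide)) (pow_ne_zero _ ?_)
    split_ifs <;> simp [(Fact.out : p.Prime).ne_zero]
  set u : F × F → ZMod p := fun z => f z.1 + f z.2
  have hsq : ∑ z, zpChar p (u z) = s * zpChar p (2 * fstar 0) := by
    have hs' : (s : ℂ) = ε ^ 2 * (sqrtPstar p ^ 2) ^ m := by simp [s, sqrtPstar_sq]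
    rw [AddChar.sum_prod_add_eq_sq, hT, two_mul, AddChar.map_add_eq_mul, hs']
    ring
  suffices (2 : ZMod p) * fstar 0 = 0 from
    (mul_eq_zero.1 this).resolve_left (Ring.two_ne_zero (by rwa [ZMod.ringChar_zmod_n]))
  by_cases hdeg : ∀ a : (ZMod p)ˣ, (a : ZMod p) ^ h = 1
  · refine eq_zero_of_sum_zpChar_eq_of_smul_invariant hp3 (u := u) (by simp [u, hf0])
      (fun a z => ?_) hsq
    simp [u, Units.smul_def, Algebra.smul_def, hhom, hdeg]
  · obtain ⟨a, ha⟩ := not_forall.1 hdeg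
    refine eq_zero_of_sum_zpChar_mul_eq_self u hs hsq (pow_ne_zero _ a.ne_zero) ha ?_
    refine Fintype.sum_bijective (a • ·) (MulAction.bijective a) _ _ fun z => ?_
    simp [u, Units.smul_def, Algebra.smul_def, hhom, mul_add]

theorem stmt_9 (p m : ℕ) [Fact p.Prime] (hp2 : p ≠ 2) (hm : 0 < m)
    (F : Type) [Field F] [Fintype F] [Algebra (ZMod p) F]
    (hcard : Fintype.card F = p ^ m)
    (f fstar : F → ZMod p) (ε : ℤ) (hε : ε = 1 ∨ ε = -1)
    (hW : ∀ β : F, ∑ x : F, zp p ^ (f x + Algebra.trace (ZMod p) F (β * x)).val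
      = (ε : ℂ) * sqrtPstar p ^ m * zp p ^ (fstar β).val)
    (hf0 : f 0 = 0) (h : ℕ) (hh : Nat.gcd (h - 1) (p - 1) = 1)
    (hhom : ∀ (a : (ZMod p)ˣ) (x : F),
      f (algebraMap (ZMod p) F (a : ZMod p) * x) = (a : ZMod p) ^ h * f x) :
    fstar 0 = 0 :=
  stmt_9_general p m hp2 F f fstar ε hε hW hf0 h hhom
end

section
/- Let f ∈ RF with sign ε, m even, and β ∈ 𝔽_q^×. Let N_{sq,β} = #{x ∈ 𝔽_q : f(x) is a nonzero square in 𝔽_p and Tr(βx)=0}. Then N_{sq,β} = ((p-1)/2)[p^{m-2} - ε(-1/p)^{m/2}p^{(m-2)/2}] if f*(β)=0 or f*(β) is a nonsquare, and N_{sq,β} = ((p-1)/2)[p^{m-2} + ε(-1/p)^{m/2}p^{(m-2)/2}] if f*(β) is a nonzero square. -/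
open Complex

/-!
Detect `f x = j` and `Tr (β x) = 0` with the additive character `ψ` of `𝔽_p`: this writes
`p² N` as a combination of the sums `∑ₓ ψ (y f(x) + z Tr(βx))`. Because `A = ε √(p*)^m` is an
integer, the Galois automorphism `ζ ↦ ζ^y` of `ℚ(ζ_p)` turns such a sum with `y ≠ 0` into
`A ψ (y f*(y⁻¹ z β))`, whence `p² N = #S (q - p A) + p A · #{u ∈ 𝔽_p | f*(u β) ∈ S}` for `S` the
nonzero squares. Homogeneity of `f` passes to `f*(w^(h-1) γ) = w^h f*(γ)`; since `w^(h-1)` runs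
over `𝔽_pˣ` and `h` is even, `f*(u β)` is a nonzero square times `f*(β)` for `u ≠ 0`. Also
`f*(0) = 0`: otherwise `f` and `f*` are `𝔽_pˣ`-invariant, and counting free `𝔽_pˣ`-orbits in the
identity above modulo `p - 1` fails. So the last count is `p - 1` or `0` according as `f*(β)` is a
nonzero square or not.
-/

open Finset

local notation "ψ" => ZMod.stdAddChar

theorem AddChar.map_zmod_mul_eq_pow_val {N : ℕ} [NeZero N] {M : Type*} [CommMonoid M]
    (χ : AddChar (ZMod N) M) (c a : ZMod N) : χ (c * a) = χ c ^ a.val := by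
  rw [← AddChar.map_nsmul_eq_pow, nsmul_eq_mul, ZMod.natCast_zmod_val, mul_comm]

theorem IsPrimitiveRoot.aeval_pow_eq_zero_of_coprime {K : Type*} [CommRing K] [IsDomain K]
    [CharZero K] {μ : K} {n m : ℕ} (hμ : IsPrimitiveRoot μ n) (hn : 0 < n)
    (hcop : m.Coprime n) {P : Polynomial ℤ} (hP : Polynomial.aeval μ P = 0) :
    Polynomial.aeval (μ ^ m) P = 0 := by
  obtain ⟨Q, rfl⟩ := minpoly.isIntegrallyClosed_dvd (hμ.isIntegral hn) hP
  rw [map_mul, hμ.minpoly_eq_pow_coprime hcop, minpoly.aeval, zero_mul]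

namespace ZMod

variable {N : ℕ} [NeZero N]

theorem isPrimitiveRoot_stdAddChar_one : IsPrimitiveRoot (ψ (1 : ZMod N)) N := by
  have h := stdAddChar_coe (N := N) 1
  push_cast at h
  rw [h]
  convert Complex.isPrimitiveRoot_exp N (NeZero.ne N) using 2
  ring

/-- Galois conjugation `ψ 1 ↦ ψ 1 ^ c.val` fixes the integer `A`. -/
theorem sum_stdAddChar_units_mul_eq {ι : Type*} [Fintype ι] (c : (ZMod N)ˣ)
    {g : ι → ZMod N} {A : ℤ} {r : ZMod N} (H : ∑ i, ψ (g i) = A * ψ r) :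
    ∑ i, ψ ((c : ZMod N) * g i) = A * ψ ((c : ZMod N) * r) := by
  open Polynomial in
  set P : ℤ[X] := ∑ i, X ^ (g i).val - C A * X ^ r.val
  have hP : ∀ w : ℂ, aeval w P = ∑ i, w ^ (g i).val - A * w ^ r.val := fun w => by simp [P]
  have hζ : aeval (ψ (1 : ZMod N)) P = 0 := by
    simp only [hP, ← AddChar.map_zmod_mul_eq_pow_val, one_mul, H, sub_self]
  have hc := isPrimitiveRoot_stdAddChar_one.aeval_pow_eq_zero_of_coprime (NeZero.pos N)
    (val_coe_unit_coprime c) hζ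
  rwa [← AddChar.map_zmod_mul_eq_pow_val, one_mul, hP, sub_eq_zero,
    ← AddChar.map_zmod_mul_eq_pow_val,
    sum_congr rfl fun i _ => (AddChar.map_zmod_mul_eq_pow_val _ _ _).symm] at hc

theorem sum_stdAddChar_mul (a : ZMod N) :
    ∑ y : ZMod N, ψ (y * a) = if a = 0 then (N : ℂ) else 0 := by
  rw [AddChar.sum_mulShift a (isPrimitive_stdAddChar N), ZMod.card, Nat.cast_ite, Nat.cast_zero]

theorem sum_mul_sum_stdAddChar_comm {ι : Type*} [Fintype ι] (g T : ι → ZMod N) (j : ZMod N) :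
    ∑ x, (∑ y : ZMod N, ψ (y * (g x - j))) * ∑ z : ZMod N, ψ (z * T x)
      = ∑ y : ZMod N, ψ (y * -j) * ∑ z : ZMod N, ∑ x, ψ (y * g x + z * T x) := by
  calc _ = ∑ x, ∑ y : ZMod N, ∑ z : ZMod N, ψ (y * (g x - j)) * ψ (z * T x) := by
        simp_rw [sum_mul_sum]
    _ = ∑ y : ZMod N, ∑ z : ZMod N, ∑ x, ψ (y * -j) * ψ (y * g x + z * T x) := by
        rw [sum_comm]
        refine sum_congr rfl fun y _ => ?_
        rw [sum_comm]
        refine sum_congr rfl fun z _ => sum_congr rfl fun x _ => ?_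
        rw [← AddChar.map_add_eq_mul, ← AddChar.map_add_eq_mul]
        ring_nf
    _ = _ := by simp_rw [mul_sum]

end ZMod

theorem zp_pow_val {p : ℕ} [NeZero p] (a : ZMod p) : zp p ^ a.val = ψ a := by
  conv_rhs => rw [← ZMod.natCast_zmod_val a, ← Int.cast_natCast, ZMod.stdAddChar_coe]
  rw [zp, ← Complex.exp_nat_mul]
  push_cast
  ring_nf

theorem sqrtPstar_sq_s19 {p : ℕ} [Fact p.Prime] (hp : p ≠ 2) :
    sqrtPstar p ^ 2 = ((legendreSym p (-1) * p : ℤ) : ℂ) := by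
  have hodd : p % 2 = 1 := Nat.odd_iff.mp ((Fact.out : p.Prime).odd_of_ne_two hp)
  have hsqrt : ((Real.sqrt p : ℝ) : ℂ) ^ 2 = p := by
    rw [← Complex.ofReal_pow, Real.sq_sqrt (Nat.cast_nonneg p), Complex.ofReal_natCast]
  rw [legendreSym.at_neg_one hp, ZMod.χ₄_nat_eq_if_mod_four, if_neg (by omega), sqrtPstar]
  split_ifs with h4
  · simp [hsqrt]
  · simp [mul_pow, hsqrt]

theorem Module.card_units_dvd_card_of_smul_mem {k V : Type*} [DivisionRing k]
    [AddCommGroup V] [Module k V] (S : Finset V) (h0 : 0 ∉ S)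
    (hS : ∀ a : kˣ, ∀ x ∈ S, a • x ∈ S) : Nat.card kˣ ∣ #S := by
  let M : SubMulAction kˣ V := ⟨S, fun a _ hx => hS a _ hx⟩
  have hfree : ∀ b : M, MulAction.stabilizer kˣ b = ⊥ := fun b => by
    rw [SubMulAction.stabilizer_of_subMul]
    exact Module.stabilizer_units_eq_bot_of_ne_zero k (fun hb => h0 (hb ▸ b.2))
  rw [← Nat.card_eq_finsetCard, show Nat.card S = Nat.card M from rfl,
    Nat.card_congr (MulAction.selfEquivOrbitsQuotientProd hfree), Nat.card_prod]
  exact dvd_mul_left _ _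

theorem FiniteField.two_mul_card_nonzero_isSquare {F : Type*} [Field F] [Fintype F]
    [DecidableEq F] [DecidablePred (IsSquare : F → Prop)] (hF : ringChar F ≠ 2) :
    2 * #{a : F | a ≠ 0 ∧ IsSquare a} = Fintype.card F - 1 := by
  have hdiff : ∑ a : F, (quadraticChar F a : ℤ)
      = #{a : F | a ≠ 0 ∧ IsSquare a} - #{a : F | a ≠ 0 ∧ ¬IsSquare a} := by
    rw [natCast_card_filter, natCast_card_filter, ← sum_sub_distrib]
    refine sum_congr rfl fun a _ => ?_
    simp only [quadraticChar_apply, quadraticCharFun]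
    split_ifs <;> simp_all
  have htotal : #{a : F | a ≠ 0 ∧ IsSquare a} + #{a : F | a ≠ 0 ∧ ¬IsSquare a}
      = Fintype.card F - 1 := by
    rw [← filter_filter, ← filter_filter, card_filter_add_card_filter_not, filter_ne',
      card_erase_of_mem (mem_univ _), card_univ]
  rw [quadraticChar_sum_zero hF] at hdiff
  omega

theorem Module.not_sub_one_dvd_card_of_zmod {p : ℕ} [Fact p.Prime] (hp : p ≠ 2) {V : Type*}
    [AddCommGroup V] [Module (ZMod p) V] [Fintype V] : ¬ (p - 1 : ℤ) ∣ Fintype.card V := by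
  intro hdvd
  rw [Module.card_eq_pow_finrank (K := ZMod p), ZMod.card, Nat.cast_pow] at hdvd
  have hone : (p - 1 : ℤ) ∣ 1 := by
    simpa using dvd_sub hdvd (sub_one_dvd_pow_sub_one (p : ℤ) (Module.finrank (ZMod p) V))
  have := Int.le_of_dvd one_pos hone
  have := (Fact.out : p.Prime).two_le
  omega

section Walsh

variable {p : ℕ} [Fact p.Prime] {F : Type*} [Field F] [Fintype F] [Algebra (ZMod p) F]

theorem sum_stdAddChar_trace_mul [DecidableEq F] (γ : F) :
    ∑ x : F, ψ (Algebra.trace (ZMod p) F (γ * x))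
      = if γ = 0 then (Fintype.card F : ℂ) else 0 := by
  let χ : AddChar F ℂ := (ψ : AddChar (ZMod p) ℂ).compAddMonoidHom
    (Algebra.trace (ZMod p) F).toAddMonoidHom
  have hχ : χ ≠ 1 := by
    obtain ⟨x, hx⟩ := Algebra.trace_surjective (ZMod p) F 1
    refine AddChar.ne_one_iff.2 ⟨x, ?_⟩
    simp only [χ, AddChar.compAddMonoidHom_apply, LinearMap.toAddMonoidHom_coe, hx]
    rw [← AddChar.map_zero_eq_one (ψ : AddChar (ZMod p) ℂ), Ne,
      ZMod.injective_stdAddChar.eq_iff]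
    exact one_ne_zero
  simpa [χ, mul_comm γ, Nat.cast_ite] using
    AddChar.sum_mulShift γ (AddChar.IsPrimitive.of_ne_one hχ)

theorem sum_sum_stdAddChar_mul_trace {β : F} (hβ : β ≠ 0) :
    ∑ z : ZMod p, ∑ x : F, ψ (z * Algebra.trace (ZMod p) F (β * x)) = Fintype.card F := by
  classical
  have h : ∀ (z : ZMod p) (x : F),
      z * Algebra.trace (ZMod p) F (β * x) = Algebra.trace (ZMod p) F ((z • β) * x) :=
    fun z x => by rw [smul_mul_assoc, map_smul, smul_eq_mul]
  simp_rw [h, sum_stdAddChar_trace_mul, smul_eq_zero, hβ, or_false, sum_ite_eq', mem_univ,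
    if_true]

/-- For weakly regular bent `f` on `𝔽_{p^m}`, `m` even, `A = ε √(p*)^m` is an integer. -/
def HasWalshSpectrum (f : F → ZMod p) (A : ℤ) (fstar : F → ZMod p) : Prop :=
  ∀ γ : F, ∑ x, ψ (f x + Algebra.trace (ZMod p) F (γ * x)) = A * ψ (fstar γ)

variable {f fstar : F → ZMod p} {A : ℤ}

theorem HasWalshSpectrum.sum_sum_mul_add_trace (hW : HasWalshSpectrum f A fstar) {y : ZMod p}
    (hy : y ≠ 0) (β : F) :
    ∑ z : ZMod p, ∑ x, ψ (y * f x + z * Algebra.trace (ZMod p) F (β * x))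
      = A * ∑ u : ZMod p, ψ (y * fstar (u • β)) := by
  have hz : ∀ z, ∑ x, ψ (y * f x + z * Algebra.trace (ZMod p) F (β * x))
      = A * ψ (y * fstar ((y⁻¹ * z) • β)) := fun z => by
    have := ZMod.sum_stdAddChar_units_mul_eq (Units.mk0 y hy) (hW ((y⁻¹ * z) • β))
    rw [Units.val_mk0] at this
    rw [← this]
    refine sum_congr rfl fun x _ => ?_
    rw [smul_mul_assoc, map_smul, smul_eq_mul, mul_add, ← mul_assoc, mul_inv_cancel_left₀ hy]
  rw [sum_congr rfl fun z _ => hz z, ← mul_sum]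
  exact congrArg _
    (Equiv.sum_comp (Equiv.mulLeft₀ y⁻¹ (inv_ne_zero hy)) fun u => ψ (y * fstar (u • β)))

theorem HasWalshSpectrum.sum_fiber_trace (hW : HasWalshSpectrum f A fstar) {β : F}
    (hβ : β ≠ 0) (j : ZMod p) :
    ∑ x, (∑ y : ZMod p, ψ (y * (f x - j)))
        * ∑ z : ZMod p, ψ (z * Algebra.trace (ZMod p) F (β * x))
      = A * ∑ u : ZMod p, (if fstar (u • β) = j then (p : ℂ) else 0)
        + (Fintype.card F - p * A) := by
  have hy : ∀ y : ZMod p,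
      ψ (y * -j) * ∑ z : ZMod p, ∑ x, ψ (y * f x + z * Algebra.trace (ZMod p) F (β * x))
        = A * ∑ u : ZMod p, ψ (y * (fstar (u • β) - j))
          + if y = 0 then (Fintype.card F - p * A : ℂ) else 0 := by
    intro y
    rcases eq_or_ne y 0 with rfl | hy
    · simp [sum_sum_stdAddChar_mul_trace hβ]
      ring
    · rw [hW.sum_sum_mul_add_trace hy, if_neg hy, add_zero, mul_left_comm, mul_sum]
      refine congrArg _ (sum_congr rfl fun u _ => ?_)
      rw [← AddChar.map_add_eq_mul]
      ring_nf
  rw [ZMod.sum_mul_sum_stdAddChar_comm, sum_congr rfl fun y _ => hy y, sum_add_distrib,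
    ← mul_sum, sum_comm]
  simp_rw [ZMod.sum_stdAddChar_mul, sub_eq_zero, sum_ite_eq', mem_univ, if_true]

theorem HasWalshSpectrum.card_filter_trace_eq (hW : HasWalshSpectrum f A fstar) {β : F}
    (hβ : β ≠ 0) (P : ZMod p → Prop) [DecidablePred P] :
    (p : ℤ) ^ 2 * #{x | P (f x) ∧ Algebra.trace (ZMod p) F (β * x) = 0}
      = #{j | P j} * (Fintype.card F - p * A) + p * A * #{u : ZMod p | P (fstar (u • β))} := by
  classical
  have hind : ∀ x, (∑ j ∈ {j | P j}, ∑ y : ZMod p, ψ (y * (f x - j)))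
        * ∑ z : ZMod p, ψ (z * Algebra.trace (ZMod p) F (β * x))
      = if P (f x) ∧ Algebra.trace (ZMod p) F (β * x) = 0 then (p : ℂ) ^ 2 else 0 := by
    intro x
    simp_rw [ZMod.sum_stdAddChar_mul, sub_eq_zero, sum_ite_eq, mem_filter, mem_univ, true_and]
    split_ifs <;> simp_all [sq]
  suffices key : ((p : ℤ) ^ 2 * #{x | P (f x) ∧ Algebra.trace (ZMod p) F (β * x) = 0} : ℂ)
      = #{j | P j} * (Fintype.card F - p * A) + p * A * #{u : ZMod p | P (fstar (u • β))} by
    exact_mod_cast key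
  calc _ = ∑ x, (∑ j ∈ {j | P j}, ∑ y : ZMod p, ψ (y * (f x - j)))
          * ∑ z : ZMod p, ψ (z * Algebra.trace (ZMod p) F (β * x)) := by
        rw [sum_congr rfl fun x _ => hind x, ← sum_filter, sum_const, nsmul_eq_mul]
        push_cast
        ring
    _ = ∑ j ∈ {j | P j}, ((A : ℂ) * ∑ u : ZMod p, (if fstar (u • β) = j then (p : ℂ) else 0)
          + (Fintype.card F - p * A)) := by
        rw [sum_congr rfl fun j _ => (hW.sum_fiber_trace hβ j).symm, sum_comm]
        exact sum_congr rfl fun x _ => sum_mul _ _ _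
    _ = _ := by
        rw [sum_add_distrib, ← mul_sum, sum_comm, sum_const, nsmul_eq_mul]
        simp_rw [sum_ite_eq, mem_filter, mem_univ, true_and, ← sum_filter, sum_const,
          nsmul_eq_mul]
        ring

theorem HasWalshSpectrum.fstar_smul (hW : HasWalshSpectrum f A fstar) (hA : A ≠ 0) {h : ℕ}
    (hhom : ∀ (a : (ZMod p)ˣ) (x : F), f (a • x) = a ^ h • f x) (a : (ZMod p)ˣ) (γ : F) :
    fstar ((a ^ h * a⁻¹) • γ) = a ^ h • fstar γ := by
  have key : A * ψ (fstar ((a ^ h * a⁻¹) • γ))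
      = A * ψ (((a ^ h : (ZMod p)ˣ) : ZMod p) * fstar γ) := by
    rw [← hW, ← ZMod.sum_stdAddChar_units_mul_eq (a ^ h) (hW γ),
      ← Equiv.sum_comp (MulAction.toPerm a)]
    refine sum_congr rfl fun x _ => congrArg ψ ?_
    rw [MulAction.toPerm_apply, hhom, Units.smul_def, Units.smul_def (a ^ h * a⁻¹),
      Units.smul_def a, smul_mul_smul_comm, map_smul, ← Units.val_mul, inv_mul_cancel_right,
      smul_eq_mul, smul_eq_mul, mul_add]
  rw [Units.smul_def (a ^ h) (fstar γ), smul_eq_mul]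
  exact ZMod.injective_stdAddChar (mul_left_cancel₀ (Int.cast_ne_zero.2 hA) key)

theorem HasWalshSpectrum.fstar_zero_of_smul_invariant (hW : HasWalshSpectrum f A fstar)
    (hp : p ≠ 2) (hf : ∀ (a : (ZMod p)ˣ) (x : F), f (a • x) = f x)
    (hfstar : ∀ (a : (ZMod p)ˣ) (γ : F), fstar (a • γ) = fstar γ) (hf0 : f 0 = 0) :
    fstar 0 = 0 := by
  classical
  by_contra hj
  -- the count of `f = fstar 0` on `ker Tr` is `≡ 0`, and the count of `fstar = fstar 0` on the
  -- line `𝔽_p` is `≡ 1`, modulo the orbit size `p - 1`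
  have hN : p - 1 ∣ #{x : F | f x = fstar 0 ∧ Algebra.trace (ZMod p) F (1 * x) = 0} := by
    rw [← ZMod.card_units p, ← Nat.card_eq_fintype_card]
    apply Module.card_units_dvd_card_of_smul_mem
    · simp [hf0, Ne.symm hj]
    · intro a x hx
      simp only [mem_filter, mem_univ, true_and, one_mul] at hx ⊢
      rw [hf, Units.smul_def, map_smul, hx.2, smul_zero]
      exact ⟨hx.1, rfl⟩
  have hD : p - 1 ∣ #{u : ZMod p | u ≠ 0 ∧ fstar (u • (1 : F)) = fstar 0} := by
    rw [← ZMod.card_units p, ← Nat.card_eq_fintype_card]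
    apply Module.card_units_dvd_card_of_smul_mem
    · simp
    · intro a u hu
      simp only [mem_filter, mem_univ, true_and] at hu ⊢
      refine ⟨by simpa [Units.smul_def] using hu.1, ?_⟩
      rw [smul_assoc, hfstar, hu.2]
  have hD' : #{u : ZMod p | fstar (u • (1 : F)) = fstar 0}
      = #{u : ZMod p | u ≠ 0 ∧ fstar (u • (1 : F)) = fstar 0} + 1 := by
    rw [← card_insert_of_notMem (a := (0 : ZMod p)) (by simp)]
    congr 1
    ext u
    by_cases hu : u = 0 <;> simp [hu]
  obtain ⟨s, hs⟩ := hN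
  obtain ⟨t, ht⟩ := hD
  have hcount := hW.card_filter_trace_eq one_ne_zero (· = fstar 0)
  rw [hs, hD', ht] at hcount
  simp only [filter_eq', mem_univ, if_true, card_singleton] at hcount
  push_cast [Nat.cast_sub (Fact.out : p.Prime).one_le] at hcount
  exact Module.not_sub_one_dvd_card_of_zmod hp
    ⟨p ^ 2 * s - p * A * t, by linear_combination -hcount⟩

theorem HasWalshSpectrum.fstar_zero (hW : HasWalshSpectrum f A fstar) (hA : A ≠ 0) (hp : p ≠ 2)
    {h : ℕ} (hhom : ∀ (a : (ZMod p)ˣ) (x : F), f (a • x) = a ^ h • f x) (hf0 : f 0 = 0) :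
    fstar 0 = 0 := by
  by_contra hj
  have hpow : ∀ a : (ZMod p)ˣ, a ^ h = 1 := fun a => by
    have := hW.fstar_smul hA hhom a 0
    rw [smul_zero, Units.smul_def, smul_eq_mul] at this
    exact Units.val_eq_one.1 ((mul_eq_right₀ hj).1 this.symm)
  refine hj (hW.fstar_zero_of_smul_invariant hp (fun a x => ?_) (fun a γ => ?_) hf0)
  · rw [hhom, hpow, one_smul]
  · simpa [hpow] using hW.fstar_smul hA hhom a⁻¹ γ

theorem HasWalshSpectrum.exists_isSquare_fstar_smul (hW : HasWalshSpectrum f A fstar)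
    (hA : A ≠ 0) (hp : p ≠ 2) {h : ℕ} (hh : Nat.gcd (h - 1) (p - 1) = 1)
    (hhom : ∀ (a : (ZMod p)ˣ) (x : F), f (a • x) = a ^ h • f x) (u : (ZMod p)ˣ) (γ : F) :
    ∃ s : (ZMod p)ˣ, IsSquare (s : ZMod p) ∧ fstar (u • γ) = s • fstar γ := by
  have hp2 : 2 ≤ p := (Fact.out : p.Prime).two_le
  have hpodd : p % 2 = 1 := Nat.odd_iff.1 ((Fact.out : p.Prime).odd_of_ne_two hp)
  have hh1 : 1 ≤ h := by
    by_contra h0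
    rw [show h = 0 by omega, Nat.zero_sub, Nat.gcd_zero_left] at hh
    omega
  have heven : Even h := by
    have : ¬ 2 ∣ h - 1 := fun h2 => by
      have := Nat.dvd_gcd h2 (show 2 ∣ p - 1 by omega)
      rw [hh] at this
      omega
    exact Nat.even_iff.2 (by omega)
  have hcop : (Nat.card (ZMod p)ˣ).Coprime (h - 1) := by
    rw [Nat.card_eq_fintype_card, ZMod.card_units, Nat.coprime_comm]
    exact hh
  obtain ⟨w, hw⟩ := hcop.pow_left_bijective.2 u
  dsimp only at hw
  refine ⟨w ^ h, ?_, ?_⟩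
  · rw [Units.val_pow_eq_pow_val]
    exact heven.isSquare_pow _
  · rw [← hW.fstar_smul hA hhom w γ, ← hw, pow_sub w hh1, pow_one]

theorem HasWalshSpectrum.card_filter_isSquare_fstar_smul (hW : HasWalshSpectrum f A fstar)
    (hA : A ≠ 0) (hp : p ≠ 2) {h : ℕ} (hh : Nat.gcd (h - 1) (p - 1) = 1)
    (hhom : ∀ (a : (ZMod p)ˣ) (x : F), f (a • x) = a ^ h • f x) (hf0 : f 0 = 0)
    [DecidablePred (IsSquare : ZMod p → Prop)] (β : F) :
    #{u : ZMod p | fstar (u • β) ≠ 0 ∧ IsSquare (fstar (u • β))}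
      = if fstar β ≠ 0 ∧ IsSquare (fstar β) then p - 1 else 0 := by
  have key : ∀ u : ZMod p, (fstar (u • β) ≠ 0 ∧ IsSquare (fstar (u • β)))
      ↔ u ≠ 0 ∧ (fstar β ≠ 0 ∧ IsSquare (fstar β)) := by
    intro u
    rcases eq_or_ne u 0 with rfl | hu
    · simp [hW.fstar_zero hA hp hhom hf0]
    · obtain ⟨s, hs, hsu⟩ := hW.exists_isSquare_fstar_smul hA hp hh hhom (Units.mk0 u hu) β
      have hsq : IsSquare ((s : ZMod p) * fstar β) ↔ IsSquare (fstar β) :=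
        ⟨fun h => inv_mul_cancel_left₀ s.ne_zero (fstar β) ▸ hs.inv.mul h, hs.mul⟩
      rw [Units.smul_def, Units.val_mk0] at hsu
      rw [hsu, Units.smul_def, smul_eq_mul, hsq]
      simp [hu]
  rw [filter_congr fun u _ => key u]
  split_ifs with hP <;> simp [hP, filter_ne', ZMod.card]

end Walsh

theorem stmt_19_general (p m : ℕ) [Fact p.Prime] (hp2 : p ≠ 2) (hme : Even m) (hm : 2 ≤ m)
    [DecidablePred (IsSquare (α := ZMod p))]
    (F : Type) [Field F] [Fintype F] [Algebra (ZMod p) F]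
    (hcard : Fintype.card F = p ^ m)
    (f fstar : F → ZMod p) (ε : ℤ) (hε : ε = 1 ∨ ε = -1)
    (hW : ∀ β : F, ∑ x : F, zp p ^ (f x + Algebra.trace (ZMod p) F (β * x)).val
      = (ε : ℂ) * sqrtPstar p ^ m * zp p ^ (fstar β).val)
    (hf0 : f 0 = 0) (h : ℕ) (hh : Nat.gcd (h - 1) (p - 1) = 1)
    (hhom : ∀ (a : (ZMod p)ˣ) (x : F),
      f (algebraMap (ZMod p) F (a : ZMod p) * x) = (a : ZMod p) ^ h * f x)
    (β : F) (hβ : β ≠ 0) :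
    ((fstar β = 0 ∨ (fstar β ≠ 0 ∧ ¬ IsSquare (fstar β))) →
      (((Finset.univ.filter fun x : F =>
            (f x ≠ 0 ∧ IsSquare (f x)) ∧ Algebra.trace (ZMod p) F (β * x) = 0).card : ℤ)
        = (((p : ℤ) - 1) / 2)
            * ((p : ℤ) ^ (m - 2) - ε * (legendreSym p (-1)) ^ (m / 2) * (p : ℤ) ^ ((m - 2) / 2))))
    ∧ ((fstar β ≠ 0 ∧ IsSquare (fstar β)) →
      (((Finset.univ.filter fun x : F =>
            (f x ≠ 0 ∧ IsSquare (f x)) ∧ Algebra.trace (ZMod p) F (β * x) = 0).card : ℤ)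
        = (((p : ℤ) - 1) / 2)
            * ((p : ℤ) ^ (m - 2) + ε * (legendreSym p (-1)) ^ (m / 2) * (p : ℤ) ^ ((m - 2) / 2)))) := by
  obtain ⟨k, rfl⟩ : ∃ k, m = 2 * k + 2 := ⟨m / 2 - 1, by obtain ⟨r, hr⟩ := hme; omega⟩
  have hp0 := (Fact.out : p.Prime).ne_zero
  set η := legendreSym p (-1)
  obtain ⟨A, hAdef⟩ : ∃ A : ℤ, A = ε * (η * p) ^ (k + 1) := ⟨_, rfl⟩
  have hWA : HasWalshSpectrum f A fstar := fun γ => by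
    simp only [zp_pow_val] at hW
    rw [hW, show 2 * k + 2 = 2 * (k + 1) by ring, pow_mul, sqrtPstar_sq_s19 hp2, hAdef]
    push_cast
    ring
  have hA : A ≠ 0 := by
    rcases hε with rfl | rfl <;>
      rcases legendreSym.eq_one_or_neg_one p (a := -1) (by simp) with hη | hη <;>
      simp [hAdef, η, hη, hp0]
  have hhom' : ∀ (a : (ZMod p)ˣ) (x : F), f (a • x) = a ^ h • f x := fun a x => by
    rw [Units.smul_def, Algebra.smul_def, hhom, Units.smul_def, smul_eq_mul,
      Units.val_pow_eq_pow_val]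
  have hcount := hWA.card_filter_trace_eq hβ (fun j => j ≠ 0 ∧ IsSquare j)
  rw [hWA.card_filter_isSquare_fstar_smul hA hp2 hh hhom' hf0 β, hcard] at hcount
  have hsq := FiniteField.two_mul_card_nonzero_isSquare (F := ZMod p)
    (by rwa [ZMod.ringChar_zmod_n])
  rw [ZMod.card] at hsq
  set t := #{j : ZMod p | j ≠ 0 ∧ IsSquare j}
  have ht : (p : ℤ) - 1 = 2 * t := by omega
  rw [show ((p : ℤ) - 1) / 2 = t by omega, show 2 * k + 2 - 2 = 2 * k by omega,
    show 2 * k / 2 = k by omega, show (2 * k + 2) / 2 = k + 1 by omega]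
  push_cast [Nat.cast_sub (Nat.one_le_iff_ne_zero.2 hp0)] at hcount
  constructor <;> intro hc <;> refine mul_left_cancel₀ (pow_ne_zero 2 (Nat.cast_ne_zero.2 hp0)) ?_
  · rw [if_neg (by tauto)] at hcount
    linear_combination hcount - t * p * hAdef
  · rw [if_pos hc] at hcount
    linear_combination hcount + t * p * hAdef + p * A * ht

theorem stmt_19 (p m : ℕ) [Fact p.Prime] (hp2 : p ≠ 2) (hme : Even m) (hm : 2 ≤ m)
    [DecidablePred (IsSquare (α := ZMod p))]
    (F : Type) [Field F] [Fintype F] [DecidableEq F] [Algebra (ZMod p) F]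
    (hcard : Fintype.card F = p ^ m)
    (f fstar : F → ZMod p) (ε : ℤ) (hε : ε = 1 ∨ ε = -1)
    (hW : ∀ β : F, ∑ x : F, zp p ^ (f x + Algebra.trace (ZMod p) F (β * x)).val
      = (ε : ℂ) * sqrtPstar p ^ m * zp p ^ (fstar β).val)
    (hf0 : f 0 = 0) (h : ℕ) (hh : Nat.gcd (h - 1) (p - 1) = 1)
    (hhom : ∀ (a : (ZMod p)ˣ) (x : F),
      f (algebraMap (ZMod p) F (a : ZMod p) * x) = (a : ZMod p) ^ h * f x)
    (β : F) (hβ : β ≠ 0) :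
    ((fstar β = 0 ∨ (fstar β ≠ 0 ∧ ¬ IsSquare (fstar β))) →
      (((Finset.univ.filter fun x : F =>
            (f x ≠ 0 ∧ IsSquare (f x)) ∧ Algebra.trace (ZMod p) F (β * x) = 0).card : ℤ)
        = (((p : ℤ) - 1) / 2)
            * ((p : ℤ) ^ (m - 2) - ε * (legendreSym p (-1)) ^ (m / 2) * (p : ℤ) ^ ((m - 2) / 2))))
    ∧ ((fstar β ≠ 0 ∧ IsSquare (fstar β)) →
      (((Finset.univ.filter fun x : F =>
            (f x ≠ 0 ∧ IsSquare (f x)) ∧ Algebra.trace (ZMod p) F (β * x) = 0).card : ℤ)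
        = (((p : ℤ) - 1) / 2)
            * ((p : ℤ) ^ (m - 2) + ε * (legendreSym p (-1)) ^ (m / 2) * (p : ℤ) ^ ((m - 2) / 2)))) :=
  stmt_19_general p m hp2 hme hm F hcard f fstar ε hε hW hf0 h hh hhom β hβ
end
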